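/- arXiv:math/0101077 — 2 statements merged into one kernel-verified Lean document; each statement's English description precedes it below -/
import Mathlib

section
/- The one-step update map of the conservative LLG integration scheme preserves unit norm: if ‖m‖ = 1 and ‖h‖ = 1, then the vector m⁺ = [( (m·h) cosh(gHΔt) + sinh(gHΔt) ) / D] h + [1/D] (cos(HΔt) Id + sin(HΔt) (h × ·)) (h × (m × h)), where D = cosh(gHΔt) + (m·h) sinh(gHΔt), satisfies ‖m⁺‖ = 1. -/
/-!
For a unit vector `h`, `h × (m × h)` is the component of `m` orthogonal to `h`, of squared length
`1 - ⟪m, h⟫²`, and `u ↦ cos θ • u + sin θ • (h × u)` rotates vectors orthogonal to `h` about `h`,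
preserving their length. So `m⁺` splits orthogonally into an `h`-component with coefficient
`(⟪m, h⟫ cosh x + sinh x) / D` and a transverse part of squared length `(1 - ⟪m, h⟫²) / D²`,
where `x = gHΔt`; by `cosh² x - sinh² x = 1` these squares add up to
`(cosh x + ⟪m, h⟫ sinh x)² / D² = 1`.
-/

open RealInnerProductSpace

noncomputable def cross3 (a b : EuclideanSpace ℝ (Fin 3)) : EuclideanSpace ℝ (Fin 3) :=
  (WithLp.equiv 2 (Fin 3 → ℝ)).symm
    (crossProduct ((WithLp.equiv 2 (Fin 3 → ℝ)) a) ((WithLp.equiv 2 (Fin 3 → ℝ)) b))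

section

variable (a b c d : EuclideanSpace ℝ (Fin 3))

lemma inner_eq_dotProduct_equiv :
    ⟪a, b⟫ = (WithLp.equiv 2 (Fin 3 → ℝ) a) ⬝ᵥ (WithLp.equiv 2 (Fin 3 → ℝ) b) := by
  rw [EuclideanSpace.inner_eq_star_dotProduct, dotProduct_comm]; rfl

lemma equiv_cross3 :
    WithLp.equiv 2 (Fin 3 → ℝ) (cross3 a b) =
      crossProduct (WithLp.equiv 2 (Fin 3 → ℝ) a) (WithLp.equiv 2 (Fin 3 → ℝ) b) := by
  simp [cross3]

lemma inner_self_cross3 : ⟪a, cross3 a b⟫ = 0 := by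
  rw [inner_eq_dotProduct_equiv, equiv_cross3, dot_self_cross]

lemma inner_cross3_self : ⟪b, cross3 a b⟫ = 0 := by
  rw [inner_eq_dotProduct_equiv, equiv_cross3, dot_cross_self]

lemma inner_cross3_cross3 :
    ⟪cross3 a b, cross3 c d⟫ = ⟪a, c⟫ * ⟪b, d⟫ - ⟪a, d⟫ * ⟪b, c⟫ := by
  simp only [inner_eq_dotProduct_equiv, equiv_cross3, cross_dot_cross]

lemma norm_cross3_sq : ‖cross3 a b‖ ^ 2 = ‖a‖ ^ 2 * ‖b‖ ^ 2 - ⟪a, b⟫ ^ 2 := by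
  rw [← real_inner_self_eq_norm_sq, inner_cross3_cross3, real_inner_self_eq_norm_sq,
    real_inner_self_eq_norm_sq, real_inner_comm]
  ring

variable {a}

lemma norm_cross3_sq_of_norm_eq_one (ha : ‖a‖ = 1) :
    ‖cross3 a (cross3 b a)‖ ^ 2 = ‖b‖ ^ 2 - ⟪b, a⟫ ^ 2 := by
  rw [norm_cross3_sq, norm_cross3_sq, inner_cross3_self, ha]
  ring

lemma inner_cos_smul_add_sin_smul_cross3 (θ : ℝ) {u : EuclideanSpace ℝ (Fin 3)}
    (hu : ⟪a, u⟫ = 0) :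
    ⟪a, Real.cos θ • u + Real.sin θ • cross3 a u⟫ = 0 := by
  rw [inner_add_right, real_inner_smul_right, real_inner_smul_right, hu, inner_self_cross3]
  ring

lemma norm_cos_smul_add_sin_smul_cross3 (ha : ‖a‖ = 1) (θ : ℝ) {u : EuclideanSpace ℝ (Fin 3)}
    (hu : ⟪a, u⟫ = 0) :
    ‖Real.cos θ • u + Real.sin θ • cross3 a u‖ = ‖u‖ := by
  have horth : ⟪Real.cos θ • u, Real.sin θ • cross3 a u⟫ = 0 := by
    rw [real_inner_smul_left, real_inner_smul_right, inner_cross3_self, mul_zero, mul_zero]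
  rw [← sq_eq_sq₀ (norm_nonneg _) (norm_nonneg _), norm_add_sq_real, horth, mul_zero, add_zero,
    norm_smul, norm_smul, mul_pow, mul_pow, norm_cross3_sq, ha, hu, Real.norm_eq_abs,
    Real.norm_eq_abs, sq_abs, sq_abs]
  linear_combination ‖u‖ ^ 2 * Real.cos_sq_add_sin_sq θ

end

lemma norm_smul_add_sq_of_inner_eq_zero {E : Type*} [NormedAddCommGroup E]
    [InnerProductSpace ℝ E] {h v : E} (hh : ‖h‖ = 1) (hv : ⟪h, v⟫ = 0) (a : ℝ) :
    ‖a • h + v‖ ^ 2 = a ^ 2 + ‖v‖ ^ 2 := by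
  rw [norm_add_sq_real, real_inner_smul_left, hv, mul_zero, mul_zero, add_zero,
    norm_smul, hh, mul_one, Real.norm_eq_abs, sq_abs]

lemma sq_add_one_sub_sq_eq_sq_cosh_add (c x : ℝ) :
    (c * Real.cosh x + Real.sinh x) ^ 2 + (1 - c ^ 2) = (Real.cosh x + c * Real.sinh x) ^ 2 := by
  linear_combination (c ^ 2 - 1) * Real.cosh_sq_sub_sinh_sq x

theorem scheme_preserves_norm (g H Δt : ℝ) (m h : EuclideanSpace ℝ (Fin 3))
    (hm : ‖m‖ = 1) (hh : ‖h‖ = 1)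
    (D : ℝ) (hD : D = Real.cosh (g * H * Δt) + ⟪m, h⟫ * Real.sinh (g * H * Δt))
    (hDpos : 0 < D) :
    ‖((⟪m, h⟫ * Real.cosh (g * H * Δt) + Real.sinh (g * H * Δt)) / D) • h +
      (1 / D) • ((Real.cos (H * Δt)) • cross3 h (cross3 m h) +
        (Real.sin (H * Δt)) • cross3 h (cross3 h (cross3 m h)))‖ = 1 := by
  set P := cross3 h (cross3 m h)
  set R := Real.cos (H * Δt) • P + Real.sin (H * Δt) • cross3 h P
  have hP : ⟪h, P⟫ = 0 := inner_self_cross3 _ _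
  have hR_orth : ⟪h, (1 / D) • R⟫ = 0 := by
    rw [real_inner_smul_right, inner_cos_smul_add_sin_smul_cross3 _ hP, mul_zero]
  have hR_norm_sq : ‖R‖ ^ 2 = 1 - ⟪m, h⟫ ^ 2 := by
    rw [norm_cos_smul_add_sin_smul_cross3 hh _ hP, norm_cross3_sq_of_norm_eq_one _ hh, hm,
      one_pow]
  rw [← pow_eq_one_iff_of_nonneg (norm_nonneg _) two_ne_zero,
    norm_smul_add_sq_of_inner_eq_zero hh hR_orth, norm_smul, mul_pow, hR_norm_sq, Real.norm_eq_abs, sq_abs,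
    div_pow, one_div, inv_pow, inv_mul_eq_div, ← add_div, sq_add_one_sub_sq_eq_sq_cosh_add, ← hD]
  exact div_self (pow_ne_zero 2 hDpos.ne')
end

section
/- If m is a unit vector satisfying the LLG equation m' = -H[(m × h) + g m × (m × h)] with h a unit vector, then the energy function E(s) = 1 - ⟪m(s), h⟫ is nonincreasing when gH ≥ 0: E'(s) = -gH(1 - ⟪m(s),h⟫²) ≤ 0. -/
open RealInnerProductSpace

/-!
Differentiating `⟪m, h⟫` gives `⟪m', h⟫`. In the LLG field the precession term `m × h` is
orthogonal to `h`, and by the BAC-CAB rule the damping term contributes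
`⟪m × (m × h), h⟫ = ⟪m, h⟫² - 1` for unit vectors, so `E' = -gH (1 - ⟪m, h⟫²)`, which is
nonpositive by Cauchy–Schwarz.
-/

lemma inner_cross3_self_right (a b : EuclideanSpace ℝ (Fin 3)) : ⟪cross3 a b, b⟫ = 0 := by
  simp [cross3, EuclideanSpace.inner_eq_star_dotProduct, dot_cross_self]

lemma cross3_cross3 (a b c : EuclideanSpace ℝ (Fin 3)) :
    cross3 a (cross3 b c) = ⟪a, c⟫ • b - ⟪a, b⟫ • c := by
  ext i
  simp [cross3, EuclideanSpace.inner_eq_star_dotProduct, cross_cross_eq_smul_sub_smul',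
    dotProduct_comm]

lemma inner_cross3_cross3_self (a b : EuclideanSpace ℝ (Fin 3)) :
    ⟪cross3 a (cross3 a b), b⟫ = ⟪a, b⟫ ^ 2 - ‖a‖ ^ 2 * ‖b‖ ^ 2 := by
  rw [cross3_cross3, inner_sub_left, real_inner_smul_left, real_inner_smul_left,
    real_inner_self_eq_norm_sq, real_inner_self_eq_norm_sq]
  ring

lemma inner_llg_field (g H : ℝ) {m h : EuclideanSpace ℝ (Fin 3)} (hm : ‖m‖ = 1) (hh : ‖h‖ = 1) :
    ⟪(-H) • (cross3 m h + g • cross3 m (cross3 m h)), h⟫ = g * H * (1 - ⟪m, h⟫ ^ 2) := by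
  rw [real_inner_smul_left, inner_add_left, real_inner_smul_left, inner_cross3_self_right,
    inner_cross3_cross3_self, hm, hh]
  ring

lemma real_inner_sq_le_one {F : Type*} [NormedAddCommGroup F] [InnerProductSpace ℝ F] {x y : F}
    (hx : ‖x‖ = 1) (hy : ‖y‖ = 1) : ⟪x, y⟫ ^ 2 ≤ 1 := by
  rw [sq_le_one_iff_abs_le_one]
  simpa [hx, hy] using abs_real_inner_le_norm x y

theorem llg_energy_decreasing (g H : ℝ) (hgH : 0 ≤ g * H)
    (h : EuclideanSpace ℝ (Fin 3)) (hh : ‖h‖ = 1)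
    (m : ℝ → EuclideanSpace ℝ (Fin 3)) (hm : Differentiable ℝ m)
    (hnorm : ∀ s, ‖m s‖ = 1)
    (heq : ∀ s, deriv m s =
      (-H) • (cross3 (m s) h + g • cross3 (m s) (cross3 (m s) h))) :
    ∀ s, deriv (fun s => 1 - ⟪m s, h⟫) s = -(g * H) * (1 - ⟪m s, h⟫ ^ 2) ∧
      -(g * H) * (1 - ⟪m s, h⟫ ^ 2) ≤ 0 := by
  intro s
  have hproj : HasDerivAt (fun s => ⟪m s, h⟫) (g * H * (1 - ⟪m s, h⟫ ^ 2)) s := by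
    have := (hm s).hasDerivAt.inner ℝ (hasDerivAt_const s h)
    rwa [inner_zero_right, zero_add, heq s, inner_llg_field g H (hnorm s) hh] at this
  refine ⟨by rw [(hproj.const_sub 1).deriv, neg_mul], ?_⟩
  exact mul_nonpos_of_nonpos_of_nonneg (neg_nonpos.mpr hgH)
    (sub_nonneg.mpr (real_inner_sq_le_one (hnorm s) hh))
end
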